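/- Let A be a set, k ≥ 1, and θ ⊆ A^(2^k) a k-transitive set of labeled k-dimensional cubes (meaning: for each i < k, the binary relation faces_i(θ) on A^(2^(k-1)) is transitive). Let γ ∈ A^(n₀ × ⋯ × n_{k-1}) be a labeled k-dimensional rectangular complex with all nᵢ ≥ 2. If every unit cell Cell_f(γ) (for f ∈ (n₀-1) × ⋯ × (n_{k-1}-1)) belongs to θ, then the cube Corners(γ) of corner labels of γ belongs to θ. -/

import Mathlib

/-- The `j`-th face of a labeled `k`-cube in direction `i`, encoded as the cube
constant in direction `i` whose value ignores the `i`-th coordinate. -/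
def face {A : Type*} {k : ℕ} (i : Fin k) (j : Fin 2) (γ : (Fin k → Fin 2) → A) :
    (Fin k → Fin 2) → A :=
  fun f => γ (Function.update f i j)

/-- `faces_i(θ)`: the binary relation on `(k-1)`-cubes (encoded as `i`-constant cubes)
obtained by reading each cube in `θ` as the pair of its two `i`-faces. -/
def facesRel {A : Type*} {k : ℕ} (i : Fin k) (θ : Set ((Fin k → Fin 2) → A)) :
    Set (((Fin k → Fin 2) → A) × ((Fin k → Fin 2) → A)) :=
  {p | ∃ γ ∈ θ, p.1 = face i 0 γ ∧ p.2 = face i 1 γ}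

/-- The subcube of `γ` with lower corner `f` and side lengths `s` (clamped). -/
def cubeOf {A : Type*} {k : ℕ} {n : Fin k → ℕ} (hn : ∀ i, 2 ≤ n i)
    (γ : (∀ i : Fin k, Fin (n i)) → A) (f s : Fin k → ℕ) : (Fin k → Fin 2) → A :=
  fun g => γ (fun i => ⟨min (f i + (g i).val * s i) (n i - 1), by have := hn i; omega⟩)

theorem cubeOf_mem {A : Type*} (k : ℕ) (hk : 1 ≤ k) (θ : Set ((Fin k → Fin 2) → A))
    (htrans : ∀ i : Fin k, ∀ a b c,
      (a, b) ∈ facesRel i θ → (b, c) ∈ facesRel i θ → (a, c) ∈ facesRel i θ)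
    (n : Fin k → ℕ) (hn : ∀ i, 2 ≤ n i) (γ : (∀ i : Fin k, Fin (n i)) → A)
    (hcells : ∀ (f : Fin k → ℕ) (hf : ∀ i, f i + 1 < n i),
      (fun g : Fin k → Fin 2 =>
        γ (fun i => ⟨f i + (g i).val, by have := hf i; have := (g i).isLt; omega⟩)) ∈ θ)
    (N : ℕ) : ∀ (f s : Fin k → ℕ), (∀ i, 1 ≤ s i) → (∀ i, f i + s i < n i) →
      (∑ i, s i) ≤ N → cubeOf hn γ f s ∈ θ := by
  induction N with
  | zero =>
    intro f s hs hfs hsum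
    exfalso
    have h1 : s ⟨0, by omega⟩ ≤ ∑ i, s i :=
      Finset.single_le_sum (fun i _ => Nat.zero_le _) (Finset.mem_univ (⟨0, by omega⟩ : Fin k))
    have := hs ⟨0, by omega⟩
    omega
  | succ N ih =>
    intro f s hs hfs hsum
    by_cases hall : ∀ i, s i = 1
    · have key := hcells f (fun i => by have := hfs i; have := hall i; omega)
      have heq : cubeOf hn γ f s = (fun g : Fin k → Fin 2 =>
          γ (fun i => ⟨f i + (g i).val, by have := (g i).isLt; have := hfs i; have := hall i; omega⟩)) := by
        funext g
        unfold cubeOf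
        congr 1
        funext i
        apply Fin.ext
        show min (f i + (g i).val * s i) (n i - 1) = f i + (g i).val
        rw [hall i, Nat.mul_one]
        have h2 := (g i).isLt
        have := hfs i
        have := hall i
        exact Nat.min_eq_left (by omega)
      rw [heq]; exact key
    · push_neg at hall
      obtain ⟨i, hi⟩ := hall
      have hsi : 2 ≤ s i := by have := hs i; omega
      have esum : ∑ l, s l = s i + ∑ l ∈ Finset.univ \ {i}, s l := by
        rw [← Finset.erase_eq]
        exact (Finset.add_sum_erase _ _ (Finset.mem_univ i)).symm
      have hL : cubeOf hn γ f (Function.update s i 1) ∈ θ := by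
        apply ih f _
        · intro l
          rcases eq_or_ne l i with h | h
          · subst h; rw [Function.update_self]
          · rw [Function.update_of_ne h]; exact hs l
        · intro l
          rcases eq_or_ne l i with h | h
          · subst h; rw [Function.update_self]; have := hfs l; omega
          · rw [Function.update_of_ne h]; exact hfs l
        · rw [Finset.sum_update_of_mem (Finset.mem_univ i)]
          omega
      have hR : cubeOf hn γ (Function.update f i (f i + 1)) (Function.update s i (s i - 1)) ∈ θ := by
        apply ih _ _
        · intro l
          rcases eq_or_ne l i with h | h
          · subst h; rw [Function.update_self]; omega
          · rw [Function.update_of_ne h]; exact hs l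
        · intro l
          rcases eq_or_ne l i with h | h
          · subst h; rw [Function.update_self, Function.update_self]; have := hfs l; omega
          · rw [Function.update_of_ne h, Function.update_of_ne h]; exact hfs l
        · rw [Finset.sum_update_of_mem (Finset.mem_univ i)]
          omega
      have h1 : (face i 0 (cubeOf hn γ f (Function.update s i 1)),
          face i 1 (cubeOf hn γ f (Function.update s i 1))) ∈ facesRel i θ := ⟨_, hL, rfl, rfl⟩
      have hmid : face i 1 (cubeOf hn γ f (Function.update s i 1)) =
          face i 0 (cubeOf hn γ (Function.update f i (f i + 1)) (Function.update s i (s i - 1))) := by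
        funext g
        unfold face cubeOf
        congr 1
        funext l
        apply Fin.ext
        show min (f l + (Function.update g i 1 l).val * Function.update s i 1 l) (n l - 1) =
          min (Function.update f i (f i + 1) l +
            (Function.update g i 0 l).val * Function.update s i (s i - 1) l) (n l - 1)
        rcases eq_or_ne l i with h | h
        · subst h; simp only [Function.update_self]
          congr 1
          simp
        · simp only [Function.update_of_ne h]
      have h2 : (face i 1 (cubeOf hn γ f (Function.update s i 1)),
          face i 1 (cubeOf hn γ (Function.update f i (f i + 1)) (Function.update s i (s i - 1))))
          ∈ facesRel i θ := ⟨_, hR, hmid, rfl⟩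
      obtain ⟨δ, hδ, ha, hc⟩ := htrans i _ _ _ h1 h2
      have hface0 : face i 0 (cubeOf hn γ f s) = face i 0 (cubeOf hn γ f (Function.update s i 1)) := by
        funext g
        unfold face cubeOf
        congr 1
        funext l
        apply Fin.ext
        show min (f l + (Function.update g i 0 l).val * s l) (n l - 1) =
          min (f l + (Function.update g i 0 l).val * Function.update s i 1 l) (n l - 1)
        rcases eq_or_ne l i with h | h
        · subst h; simp only [Function.update_self]
          simp
        · simp only [Function.update_of_ne h]
      have hface1 : face i 1 (cubeOf hn γ f s) =
          face i 1 (cubeOf hn γ (Function.update f i (f i + 1)) (Function.update s i (s i - 1))) := by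
        funext g
        unfold face cubeOf
        congr 1
        funext l
        apply Fin.ext
        show min (f l + (Function.update g i 1 l).val * s l) (n l - 1) =
          min (Function.update f i (f i + 1) l +
            (Function.update g i 1 l).val * Function.update s i (s i - 1) l) (n l - 1)
        rcases eq_or_ne l i with h | h
        · subst h; simp only [Function.update_self]
          congr 1
          simp
          omega
        · simp only [Function.update_of_ne h]
      have hδeq : cubeOf hn γ f s = δ := by
        funext g
        have hcase : g i = 0 ∨ g i = 1 := by omega
        rcases hcase with h0 | h1
        · have hupdate : Function.update g i (0 : Fin 2) = g := by
            funext l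
            rcases eq_or_ne l i with h | h
            · subst h; rw [Function.update_self]; exact h0.symm
            · rw [Function.update_of_ne h]
          calc cubeOf hn γ f s g = face i 0 (cubeOf hn γ f s) g := by
                unfold face; rw [hupdate]
            _ = face i 0 δ g := by rw [hface0, ← ha]
            _ = δ g := by unfold face; rw [hupdate]
        · have hupdate : Function.update g i (1 : Fin 2) = g := by
            funext l
            rcases eq_or_ne l i with h | h
            · subst h; rw [Function.update_self]; exact h1.symm
            · rw [Function.update_of_ne h]
          calc cubeOf hn γ f s g = face i 1 (cubeOf hn γ f s) g := by
                unfold face; rw [hupdate]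
            _ = face i 1 δ g := by rw [hface1, ← hc]
            _ = δ g := by unfold face; rw [hupdate]
      rw [hδeq]; exact hδ

theorem stmt_2 {A : Type*} (k : ℕ) (hk : 1 ≤ k) (θ : Set ((Fin k → Fin 2) → A))
    (htrans : ∀ i : Fin k, ∀ a b c,
      (a, b) ∈ facesRel i θ → (b, c) ∈ facesRel i θ → (a, c) ∈ facesRel i θ)
    (n : Fin k → ℕ) (hn : ∀ i, 2 ≤ n i) (γ : (∀ i : Fin k, Fin (n i)) → A)
    (hcells : ∀ (f : Fin k → ℕ) (hf : ∀ i, f i + 1 < n i),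
      (fun g : Fin k → Fin 2 =>
        γ (fun i => ⟨f i + (g i).val, by have := (g i).isLt; have := hf i; omega⟩)) ∈ θ) :
    (fun g : Fin k → Fin 2 =>
      γ (fun i => ⟨(g i).val * (n i - 1), by
        have h := (g i).isLt
        have := hn i
        have : (g i).val * (n i - 1) ≤ 1 * (n i - 1) := Nat.mul_le_mul_right _ (by omega)
        omega⟩)) ∈ θ := by
  have key := cubeOf_mem k hk θ htrans n hn γ hcells (∑ i, (n i - 1))
    (fun _ => 0) (fun i => n i - 1)
    (fun i => by show 1 ≤ n i - 1; have := hn i; omega)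
    (fun i => by show 0 + (n i - 1) < n i; have := hn i; omega) le_rfl
  have heq : cubeOf hn γ (fun _ => 0) (fun i => n i - 1) = (fun g : Fin k → Fin 2 =>
      γ (fun i => ⟨(g i).val * (n i - 1), by
        have h := (g i).isLt
        have := hn i
        have : (g i).val * (n i - 1) ≤ 1 * (n i - 1) := Nat.mul_le_mul_right _ (by omega)
        omega⟩)) := by
    funext g
    unfold cubeOf
    congr 1
    funext i
    apply Fin.ext
    show min (0 + (g i).val * (n i - 1)) (n i - 1) = (g i).val * (n i - 1)
    rw [Nat.zero_add]
    have hb : (g i).val * (n i - 1) ≤ 1 * (n i - 1) :=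
      Nat.mul_le_mul_right _ (by have := (g i).isLt; omega)
    rw [Nat.one_mul] at hb
    exact Nat.min_eq_left hb
  rw [← heq]; exact key
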